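/- (Theorem 2, singleton Sobol' index) Let μ be a 2-additive capacity on N with Möbius transform m, and let f^Lo(z) = Σ_{i∈N} m(i) z_i + Σ_{{i,j} ⊆ N} m(i,j) min(z_i, z_j). For k ∈ N, the nonnormalized Sobol' index of {k}, namely Var[f^Lo_k] = ∫_0^1 (f^Lo_k(z_k))² dz_k, equals m(k)²/12 + m(k,·)²/45 + m(k)·m(k,·)/12, where m(k,·) = Σ_{i ∈ N \ {k}} m(k,i). -/

import Mathlib

open MeasureTheory Finset

/-- The uniform probability measure on the unit cube `[0,1]^n`. -/
noncomputable def unifCube (n : ℕ) : Measure (Fin n → ℝ) :=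
  Measure.pi fun _ => volume.restrict (Set.Icc 0 1)

/-- The Möbius transform of a set function. -/
noncomputable def mobius {n : ℕ} (ξ : Finset (Fin n) → ℝ) (S : Finset (Fin n)) : ℝ :=
  ∑ T ∈ S.powerset, (-1 : ℝ) ^ (S \ T).card * ξ T

/-- The Fourier transform of a set function. -/
noncomputable def fourierT {n : ℕ} (ξ : Finset (Fin n) → ℝ) (S : Finset (Fin n)) : ℝ :=
  (1 / 2 ^ n : ℝ) * ∑ T : Finset (Fin n), (-1 : ℝ) ^ (S ∩ T).card * ξ T

/-- The Banzhaf interaction transform of a set function. -/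
noncomputable def banzhaf {n : ℕ} (ξ : Finset (Fin n) → ℝ) (S : Finset (Fin n)) : ℝ :=
  (1 / 2 : ℝ) ^ (n - S.card) * ∑ K : Finset (Fin n), (-1 : ℝ) ^ (S \ K).card * ξ K

/-- The multilinear (Owen) extension associated with coefficients `m`. -/
noncomputable def fOw {n : ℕ} (m : Finset (Fin n) → ℝ) (x : Fin n → ℝ) : ℝ :=
  ∑ T : Finset (Fin n), m T * ∏ i ∈ T, x i

/-- A capacity: vanishes on the empty set and is monotone. -/
def Capacity {n : ℕ} (μ : Finset (Fin n) → ℝ) : Prop :=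
  μ ∅ = 0 ∧ ∀ S T : Finset (Fin n), S ⊆ T → μ S ≤ μ T

/-- The ANOVA component of `f` associated with the subset `S`. -/
noncomputable def anova {n : ℕ} (f : (Fin n → ℝ) → ℝ) (S : Finset (Fin n))
    (z : Fin n → ℝ) : ℝ :=
  ∑ T ∈ S.powerset, (-1 : ℝ) ^ (S \ T).card *
    ∫ y, f (fun i => if i ∈ T then z i else y i) ∂unifCube n

/-- The Choquet integral (Lovász extension) of a 2-additive capacity with
Möbius transform `m`. -/
noncomputable def fLo {n : ℕ} (m : Finset (Fin n) → ℝ) (z : Fin n → ℝ) : ℝ :=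
  ∑ i, m {i} * z i +
    ∑ i, ∑ j ∈ Finset.univ.filter (fun j => i < j), m {i, j} * min (z i) (z j)
/-!
Changing `z k` only moves the linear term `m {k} * z k` and the pair terms
`m {k, i} * min (z k) (z i)`; all other terms cancel in the ANOVA difference. Integrating out
the other coordinates with `∫ y = 1/2`, `∫ min t y = t - t²/2` and `∫∫ min = 1/3` gives
`f^Lo_k(t) = m(k) (t - 1/2) + m(k,·) (t - t²/2 - 1/3)`, a polynomial whose square integrates
to the stated formula.
-/

noncomputable abbrev unifIcc : Measure ℝ := volume.restrict (Set.Icc 0 1)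

instance : IsProbabilityMeasure unifIcc := ⟨by simp⟩

lemma integral_unifIcc_eq_intervalIntegral (f : ℝ → ℝ) :
    ∫ x, f x ∂unifIcc = ∫ x in (0 : ℝ)..1, f x := by
  rw [intervalIntegral.integral_of_le zero_le_one, ← integral_Icc_eq_integral_Ioc]

lemma integrable_id_unifIcc : Integrable id unifIcc :=
  continuous_id.integrableOn_Icc

lemma integral_id_unifIcc : ∫ x, x ∂unifIcc = 1 / 2 := by
  simp [integral_unifIcc_eq_intervalIntegral]

lemma integral_min_unifIcc {t : ℝ} (ht : t ∈ Set.Icc (0 : ℝ) 1) :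
    ∫ x, min t x ∂unifIcc = t - t ^ 2 / 2 := by
  have hc : Continuous fun x : ℝ => min t x := by fun_prop
  rw [integral_unifIcc_eq_intervalIntegral,
    ← intervalIntegral.integral_add_adjacent_intervals (b := t)
      (hc.intervalIntegrable 0 t) (hc.intervalIntegrable t 1),
    intervalIntegral.integral_congr (g := fun x => x)
      fun x hx => min_eq_right (Set.uIcc_of_le ht.1 ▸ hx).2,
    intervalIntegral.integral_congr (g := fun _ => t)
      fun x hx => min_eq_left (Set.uIcc_of_le ht.2 ▸ hx).1]
  simp
  ring

lemma integral_min_prod_unifIcc : ∫ p, min p.1 p.2 ∂(unifIcc.prod unifIcc) = 1 / 3 := by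
  have hint : Integrable (fun p : ℝ × ℝ => min p.1 p.2) (unifIcc.prod unifIcc) :=
    (integrable_id_unifIcc.comp_fst _).inf (integrable_id_unifIcc.comp_snd _)
  rw [integral_prod _ hint, integral_congr_ae (g := fun x => x - x ^ 2 / 2)
    ((ae_restrict_mem measurableSet_Icc).mono fun x hx => integral_min_unifIcc hx),
    integral_unifIcc_eq_intervalIntegral]
  norm_num [integral_sub, intervalIntegral.intervalIntegrable_pow]

lemma integral_sq_singleton_profile (a b : ℝ) :
    ∫ t in (0 : ℝ)..1, (a * (t - 1 / 2) + b * (t - t ^ 2 / 2 - 1 / 3)) ^ 2 =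
      a ^ 2 / 12 + b ^ 2 / 45 + a * b / 12 := by
  set p := a / 2 + b / 3
  set q := a + b
  -- the integrand is `(-(b/2) t² + q t - p)²`
  have hF : ∀ x : ℝ, HasDerivAt
      (fun u : ℝ => b ^ 2 / 20 * u ^ 5 - b * q / 4 * u ^ 4 + (q ^ 2 + b * p) / 3 * u ^ 3
        - q * p * u ^ 2 + p ^ 2 * u)
      ((a * (x - 1 / 2) + b * (x - x ^ 2 / 2 - 1 / 3)) ^ 2) x := by
    intro x
    have h := (((((hasDerivAt_pow 5 x).const_mul (b ^ 2 / 20)).sub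
      ((hasDerivAt_pow 4 x).const_mul (b * q / 4))).add
      ((hasDerivAt_pow 3 x).const_mul ((q ^ 2 + b * p) / 3))).sub
      ((hasDerivAt_pow 2 x).const_mul (q * p))).add
      ((hasDerivAt_id x).const_mul (p ^ 2))
    refine h.congr_deriv ?_
    simp only [p, q]
    push_cast
    ring
  rw [intervalIntegral.integral_eq_sub_of_hasDerivAt (fun x _ => hF x)
    (Continuous.intervalIntegrable (by fun_prop) _ _)]
  simp only [p, q]
  ring

section UnifCube

variable {n : ℕ}

instance : IsProbabilityMeasure (unifCube n) := by
  unfold unifCube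
  infer_instance

lemma measurePreserving_eval_unifCube (i : Fin n) :
    MeasurePreserving (Function.eval i) (unifCube n) unifIcc :=
  measurePreserving_eval _ i

open ProbabilityTheory in
lemma map_eval_pair_unifCube {i j : Fin n} (hij : i ≠ j) :
    (unifCube n).map (fun y => (y i, y j)) = unifIcc.prod unifIcc := by
  have hindep : IndepFun (fun y : Fin n → ℝ => y i) (fun y => y j) (unifCube n) :=
    (iIndepFun_pi (X := fun _ x => x) fun _ => aemeasurable_id).indepFun hij
  rw [(indepFun_iff_map_prod_eq_prod_map_map (measurable_pi_apply i).aemeasurable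
    (measurable_pi_apply j).aemeasurable).1 hindep,
    (measurePreserving_eval_unifCube i).map_eq, (measurePreserving_eval_unifCube j).map_eq]

lemma integrable_eval_unifCube (i : Fin n) : Integrable (fun y => y i) (unifCube n) :=
  (measurePreserving_eval_unifCube i).integrable_comp_of_integrable integrable_id_unifIcc

lemma integral_comp_eval_unifCube (i : Fin n) {g : ℝ → ℝ} (hg : Continuous g) :
    ∫ y, g (y i) ∂unifCube n = ∫ x, g x ∂unifIcc := by
  rw [← (measurePreserving_eval_unifCube i).map_eq,
    integral_map (measurable_pi_apply i).aemeasurable hg.aestronglyMeasurable]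

lemma integral_eval_unifCube (i : Fin n) : ∫ y, y i ∂unifCube n = 1 / 2 :=
  (integral_comp_eval_unifCube i continuous_id').trans integral_id_unifIcc

lemma integral_min_eval_eval_unifCube {i j : Fin n} (hij : i ≠ j) :
    ∫ y, min (y i) (y j) ∂unifCube n = 1 / 3 := by
  rw [← integral_min_prod_unifIcc, ← map_eval_pair_unifCube hij,
    integral_map (by fun_prop)
      (by fun_prop : Continuous fun p : ℝ × ℝ => min p.1 p.2).aestronglyMeasurable]

lemma anova_singleton (f : (Fin n → ℝ) → ℝ) (k : Fin n) (z : Fin n → ℝ) :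
    anova f {k} z =
      ∫ y, f (Function.update y k (z k)) ∂unifCube n - ∫ y, f y ∂unifCube n := by
  have hupdate : ∀ y : Fin n → ℝ,
      (fun i => if i = k then z i else y i) = Function.update y k (z k) := by
    intro y
    ext i
    by_cases hi : i = k <;> simp [hi]
  have hpowerset : ({k} : Finset (Fin n)).powerset = {∅, {k}} := by
    ext T
    simp [Finset.subset_singleton_iff]
  simp [anova, hpowerset, hupdate, sub_eq_neg_add]

end UnifCube

lemma sum_sum_lt_eq_sum_sdiff {α M : Type*} [Fintype α] [LinearOrder α] [AddCommMonoid M]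
    (D : α → α → M) (k : α) (hsymm : ∀ i j, D i j = D j i)
    (hD : ∀ i j, i ≠ k → j ≠ k → D i j = 0) :
    ∑ i, ∑ j ∈ univ.filter (fun j => i < j), D i j = ∑ j ∈ univ \ {k}, D k j := by
  have hrow : ∀ i ≠ k,
      ∑ j ∈ univ.filter (fun j => i < j), D i j = if i < k then D k i else 0 := by
    intro i hi
    rw [Finset.sum_congr rfl fun j _ => (show D i j = if j = k then D k i else 0 by
      split_ifs with hj
      · rw [hj, hsymm]
      · exact hD i j hi hj), Finset.sum_ite_eq']
    simp
  rw [Finset.sum_eq_add_sum_sdiff_singleton_of_mem (mem_univ k),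
    Finset.sum_congr rfl fun i hi => hrow i (by simpa using hi), ← Finset.sum_filter,
    ← Finset.sum_filter_add_sum_filter_not (univ \ {k}) (fun j => k < j)]
  congr 2 <;> ext j <;> grind

section Lovasz

variable {n : ℕ}

lemma fLo_update_sub (m : Finset (Fin n) → ℝ) (y : Fin n → ℝ) (k : Fin n) (t : ℝ) :
    fLo m (Function.update y k t) - fLo m y =
      m {k} * (t - y k) + ∑ i ∈ univ \ {k}, m {k, i} * (min t (y i) - min (y k) (y i)) := by
  set z := Function.update y k t
  have hlin : ∑ i, m {i} * z i - ∑ i, m {i} * y i = m {k} * (t - y k) := by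
    rw [← Finset.sum_sub_distrib,
      Finset.sum_eq_single k (fun i _ hi => by simp [z, hi]) (by simp)]
    simp [z, mul_sub]
  have hpair : ∑ i, ∑ j ∈ univ.filter (fun j => i < j), m {i, j} * min (z i) (z j) -
      ∑ i, ∑ j ∈ univ.filter (fun j => i < j), m {i, j} * min (y i) (y j) =
        ∑ i ∈ univ \ {k}, m {k, i} * (min t (y i) - min (y k) (y i)) := by
    simp_rw [← Finset.sum_sub_distrib, ← mul_sub]
    rw [sum_sum_lt_eq_sum_sdiff _ k
      (fun i j => by rw [pair_comm, min_comm (z i), min_comm (y i)])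
      (fun i j hi hj => by simp [z, hi, hj])]
    refine Finset.sum_congr rfl fun i hi => ?_
    have hik : i ≠ k := by simpa using hi
    simp [z, hik]
  simp only [fLo]
  linarith

lemma integrable_fLo (m : Finset (Fin n) → ℝ) : Integrable (fLo m) (unifCube n) :=
  (integrable_finsetSum _ fun i _ => (integrable_eval_unifCube i).const_mul _).add
    (integrable_finsetSum _ fun i _ => integrable_finsetSum _ fun j _ =>
      ((integrable_eval_unifCube i).inf (integrable_eval_unifCube j)).const_mul _)

lemma anova_fLo_singleton (m : Finset (Fin n) → ℝ) (k : Fin n) {t : ℝ}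
    (ht : t ∈ Set.Icc (0 : ℝ) 1) :
    anova (fLo m) {k} (fun _ => t) =
      m {k} * (t - 1 / 2) + (∑ i ∈ univ \ {k}, m {k, i}) * (t - t ^ 2 / 2 - 1 / 3) := by
  have hint_min : ∀ i, Integrable (fun y : Fin n → ℝ => min t (y i)) (unifCube n) :=
    fun i => (integrable_const t).inf (integrable_eval_unifCube i)
  have hint_pair : ∀ i, Integrable (fun y : Fin n → ℝ => min (y k) (y i)) (unifCube n) :=
    fun i => (integrable_eval_unifCube k).inf (integrable_eval_unifCube i)
  have hint_lin : Integrable (fun y : Fin n → ℝ => m {k} * (t - y k)) (unifCube n) :=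
    ((integrable_const t).sub (integrable_eval_unifCube k)).const_mul _
  have hint_terms : ∀ i ∈ univ \ {k},
      Integrable (fun y => m {k, i} * (min t (y i) - min (y k) (y i))) (unifCube n) :=
    fun i _ => ((hint_min i).sub (hint_pair i)).const_mul _
  have hpair : ∀ i ∈ univ \ {k},
      ∫ y, m {k, i} * (min t (y i) - min (y k) (y i)) ∂unifCube n =
        m {k, i} * (t - t ^ 2 / 2 - 1 / 3) := by
    intro i hi
    rw [integral_const_mul, integral_sub (hint_min i) (hint_pair i),
      integral_comp_eval_unifCube i (by fun_prop : Continuous fun x => min t x),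
      integral_min_unifIcc ht,
      integral_min_eval_eval_unifCube (Ne.symm (by simpa using hi))]
  have hlin : ∫ y, m {k} * (t - y k) ∂unifCube n = m {k} * (t - 1 / 2) := by
    rw [integral_const_mul, integral_sub (integrable_const t) (integrable_eval_unifCube k),
      integral_const, integral_eval_unifCube]
    simp
  simp_rw [anova_singleton, fun y => eq_add_of_sub_eq' (fLo_update_sub m y k t)]
  have hint_sum := integrable_finsetSum _ hint_terms
  rw [integral_add (integrable_fLo m) (hint_lin.add hint_sum : Integrable (fun y => _ + _) _),
    add_sub_cancel_left, integral_add hint_lin hint_sum, hlin,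
    integral_finsetSum _ hint_terms, Finset.sum_congr rfl hpair, Finset.sum_mul]

end Lovasz

theorem sobol_fLo_singleton_general (n : ℕ) (μ : Finset (Fin n) → ℝ) (k : Fin n) :
    (∫ t in (0 : ℝ)..1, (anova (fLo (mobius μ)) {k} (fun _ => t)) ^ 2) =
      (mobius μ {k}) ^ 2 / 12 + (∑ i ∈ Finset.univ \ {k}, mobius μ {k, i}) ^ 2 / 45 +
        mobius μ {k} * (∑ i ∈ Finset.univ \ {k}, mobius μ {k, i}) / 12 := by
  rw [intervalIntegral.integral_congr fun t ht => congrArg (· ^ 2)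
    (anova_fLo_singleton (mobius μ) k (Set.uIcc_of_le (zero_le_one (α := ℝ)) ▸ ht))]
  exact integral_sq_singleton_profile _ _

/-- Theorem 2 (singleton Sobol' index):
`Var[f^Lo_k] = m(k)²/12 + m(k,·)²/45 + m(k) m(k,·)/12`. -/
theorem sobol_fLo_singleton (n : ℕ) (μ : Finset (Fin n) → ℝ) (hμ : Capacity μ)
    (h2 : ∀ T : Finset (Fin n), 2 < T.card → mobius μ T = 0) (k : Fin n) :
    (∫ t in (0 : ℝ)..1, (anova (fLo (mobius μ)) {k} (fun _ => t)) ^ 2) =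
      (mobius μ {k}) ^ 2 / 12 + (∑ i ∈ Finset.univ \ {k}, mobius μ {k, i}) ^ 2 / 45 +
        mobius μ {k} * (∑ i ∈ Finset.univ \ {k}, mobius μ {k, i}) / 12 :=
  sobol_fLo_singleton_general n μ k
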